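/- arXiv:2406.15600 — 2 statements merged into one kernel-verified Lean document; each statement's English description precedes it below -/
import Mathlib

section
/- For all integers m ≥ 0, k ≥ 2, and i ≥ 1, the following alternating-sum binomial identity holds: Σ_{l=0}^{k-1} (-1)^l C(m+1, l) C(i+k-l-2, i-1) C(m+k-l, m+1-i) = (-1)^{k-1} C(m+1, i+k-1). -/
/-- Integer binomial coefficient with the convention C(a,b) = 0 if b < 0 or b > a. -/
def izC (a b : ℤ) : ℤ := if 0 ≤ b ∧ b ≤ a then (a.toNat).choose b.toNat else 0

/-!
Put n = m + 1, p = i - 1, N = m + 1 - i and K = k - 1. The l-th summand is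
(-1)^l C(n, l) g(K - l) for the polynomial g(x) = C(x + p, p) C(x + n, N) of degree p + N = n - 1,
so ∑_l (-1)^l C(n, l) g(K - l), the n-th finite difference of g, vanishes. Its terms with l > K
evaluate g at -1, …, -n, where g vanishes except at -(p + 1), where it equals (-1)^p; that single
term is minus the right-hand side.
-/

open Finset Polynomial fwdDiff

theorem Ring.exists_natDegree_le_eval_eq_choose {R : Type*} [Field R] [CharZero R] (k : ℕ) :
    ∃ P : R[X], P.natDegree ≤ k ∧ ∀ x, P.eval x = Ring.choose x k := by
  refine ⟨C (k.factorial : R)⁻¹ * descPochhammer R k, ?_, fun x ↦ ?_⟩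
  · exact (natDegree_C_mul_le _ _).trans (descPochhammer_natDegree R k).le
  · rw [Ring.choose_eq_smul, eval_C_mul, smul_eq_mul, ← aeval_eq_smeval, aeval_def,
      eval₂_eq_eval_map, descPochhammer_map]

theorem Ring.choose_neg_one {R : Type*} [Ring R] [BinomialRing R] (k : ℕ) :
    Ring.choose (-1 : R) k = (-1) ^ k := by
  have h := Ring.choose_neg (1 : R) k
  rw [add_sub_cancel_left, Ring.choose_natCast, Nat.choose_self, Nat.cast_one, Units.smul_def,
    Int.coe_negOnePow_natCast, zsmul_eq_mul] at h
  simpa using h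

theorem fwdDiff_iter_choose_add_mul_choose_add_eq_zero {R : Type*} [Field R] [CharZero R]
    {p q n : ℕ} (h : p + q < n) (a b : R) :
    (Δ_[1])^[n] (fun x : R ↦ Ring.choose (x + a) p * Ring.choose (x + b) q) = 0 := by
  obtain ⟨P, hPdeg, hP⟩ := Ring.exists_natDegree_le_eval_eq_choose (R := R) p
  obtain ⟨Q, hQdeg, hQ⟩ := Ring.exists_natDegree_le_eval_eq_choose (R := R) q
  have hdeg : (taylor a P * taylor b Q).natDegree < n := by
    refine (natDegree_mul_le).trans_lt ?_
    rw [natDegree_taylor, natDegree_taylor]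
    omega
  convert Polynomial.fwdDiff_iter_eq_zero_of_degree_lt hdeg using 2
  ext x
  simp [taylor_eval, hP, hQ]

theorem sum_range_neg_one_pow_mul_choose_mul_sub_eq_zero_of_fwdDiff_iter {R : Type*} [CommRing R] {g : R → R}
    {n : ℕ} (hg : (Δ_[1])^[n] g = 0) (y : R) :
    ∑ l ∈ range (n + 1), (-1) ^ l * n.choose l * g (y - l) = 0 := by
  have h := congr_fun hg (y - n)
  rw [fwdDiff_iter_eq_sum_shift, ← sum_range_reflect, Pi.zero_apply] at h
  rw [← h]
  refine sum_congr rfl fun l hl ↦ ?_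
  have hl : l ≤ n := Nat.lt_succ_iff.1 (mem_range.1 hl)
  rw [Nat.add_sub_cancel, Nat.sub_sub_self hl, Nat.choose_symm hl, zsmul_eq_mul, nsmul_one,
    Nat.cast_sub hl, sub_add_sub_cancel]
  push_cast
  rfl

theorem Ring.choose_add_mul_choose_add_neg_natCast {R : Type*} [CommRing R] [BinomialRing R]
    {p N n t : ℕ} (hn : p + N + 1 = n) (ht : t < n) :
    Ring.choose (-(t + 1 : ℕ) + p : R) p * Ring.choose (-(t + 1 : ℕ) + n : R) N =
      if t = p then (-1) ^ p else 0 := by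
  rcases lt_trichotomy t p with htp | rfl | htp
  · have h : (-(t + 1 : ℕ) : R) + p = (p - (t + 1) : ℕ) := by
      push_cast [Nat.cast_sub (by omega : t + 1 ≤ p)]; ring
    rw [h, Ring.choose_natCast, Nat.choose_eq_zero_of_lt (by omega), if_neg htp.ne]
    simp
  · have h₁ : (-(t + 1 : ℕ) : R) + t = -1 := by push_cast; ring
    have h₂ : (-(t + 1 : ℕ) : R) + n = N := by rw [← hn]; push_cast; ring
    rw [h₁, h₂, Ring.choose_neg_one, Ring.choose_natCast, Nat.choose_self, if_pos rfl]
    simp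
  · have h : (-(t + 1 : ℕ) : R) + n = (n - (t + 1) : ℕ) := by
      push_cast [Nat.cast_sub (by omega : t + 1 ≤ n)]; ring
    rw [h, Ring.choose_natCast, Nat.choose_eq_zero_of_lt (by omega), if_neg htp.ne']
    simp

theorem sum_range_neg_one_pow_mul_choose_mul_choose_mul_choose (p N K : ℕ) :
    ∑ l ∈ range (K + 1), (-1 : ℤ) ^ l * ((p + N + 1).choose l : ℤ) * ((p + K - l).choose p : ℤ) *
        ((p + N + 1 + K - l).choose N : ℤ) = (-1) ^ K * ((p + N + 1).choose (p + K + 1) : ℤ) := by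
  generalize hn : p + N + 1 = n
  set G : ℚ → ℚ := fun x ↦ Ring.choose (x + p) p * Ring.choose (x + n) N with hG
  set f : ℕ → ℚ := fun l ↦ (-1) ^ l * n.choose l * G ((K : ℚ) - l) with hf
  have hvanish : ∑ l ∈ range (K + 1 + n), f l = 0 := by
    rw [← sum_subset (range_subset_range.2 (by omega : n + 1 ≤ K + 1 + n))]
    · exact sum_range_neg_one_pow_mul_choose_mul_sub_eq_zero_of_fwdDiff_iter (g := G)
        (fwdDiff_iter_choose_add_mul_choose_add_eq_zero (by omega) _ _) K
    · intro l _ hl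
      simp [hf, Nat.choose_eq_zero_of_lt (by rw [mem_range] at hl; omega : n < l)]
  have hshift (t : ℕ) : (K : ℚ) - (K + 1 + t : ℕ) = -(t + 1 : ℕ) := by push_cast; ring
  have htail : ∑ t ∈ range n, f (K + 1 + t) = -((-1) ^ K * n.choose (p + K + 1)) := by
    rw [sum_eq_single p]
    · simp only [hf, hG]
      rw [hshift, Ring.choose_add_mul_choose_add_neg_natCast hn (by omega), if_pos rfl,
        add_comm (K + 1) p, ← add_assoc, mul_right_comm, ← pow_add,
        show p + K + 1 + p = 2 * p + (K + 1) by ring, pow_add, pow_mul, neg_one_sq, one_pow,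
        one_mul, pow_succ]
      ring
    · intro t ht htp
      simp only [hf, hG]
      rw [hshift, Ring.choose_add_mul_choose_add_neg_natCast hn (mem_range.1 ht), if_neg htp,
        mul_zero]
    · exact fun h ↦ (h (mem_range.2 (by omega))).elim
  have hhead : ∀ l ∈ range (K + 1), f l = ((-1 : ℤ) ^ l * (n.choose l : ℤ) *
      ((p + K - l).choose p : ℤ) * ((n + K - l).choose N : ℤ) : ℤ) := by
    intro l hl
    have hl : l ≤ K := Nat.lt_succ_iff.1 (mem_range.1 hl)
    simp only [hf, hG]
    rw [← Nat.cast_sub hl, ← Nat.cast_add, ← Nat.cast_add, Ring.choose_natCast,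
      Ring.choose_natCast, show K - l + p = p + K - l by omega,
      show K - l + n = n + K - l by omega]
    push_cast
    ring
  rw [sum_range_add, htail, sum_congr rfl hhead, add_neg_eq_zero] at hvanish
  exact_mod_cast hvanish

theorem izC_natCast (a b : ℕ) : izC a b = a.choose b := by
  by_cases h : b ≤ a
  · simp [izC, h]
  · simp [izC, h, Nat.choose_eq_zero_of_lt (not_le.1 h)]

theorem izC_of_neg {a b : ℤ} (hb : b < 0) : izC a b = 0 := by
  simp [izC, hb.not_ge]

/-- alternating-sum binomial identity. -/
theorem stmt_1 (m k i : ℕ) (hk : 2 ≤ k) (hi : 1 ≤ i) :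
    ∑ l ∈ Finset.range k,
        (-1 : ℤ) ^ l * ((m + 1).choose l : ℤ) * ((i + k - l - 2).choose (i - 1) : ℤ) *
          izC ((m : ℤ) + k - l) ((m : ℤ) + 1 - i)
      = (-1 : ℤ) ^ (k - 1) * ((m + 1).choose (i + k - 1) : ℤ) := by
  obtain ⟨K, rfl⟩ : ∃ K, k = K + 1 := ⟨k - 1, by omega⟩
  obtain ⟨p, rfl⟩ : ∃ p, i = p + 1 := ⟨i - 1, by omega⟩
  rcases le_or_gt p m with hpm | hmp
  · obtain ⟨N, rfl⟩ : ∃ N, m = p + N := ⟨m - p, by omega⟩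
    rw [Nat.add_sub_cancel, show p + 1 + (K + 1) - 1 = p + K + 1 by omega, Nat.add_sub_cancel,
      ← sum_range_neg_one_pow_mul_choose_mul_choose_mul_choose]
    refine sum_congr rfl fun l hl ↦ ?_
    have hl : l ≤ K := Nat.lt_succ_iff.1 (mem_range.1 hl)
    have ha : ((p + N : ℕ) : ℤ) + (K + 1 : ℕ) - l = (p + N + 1 + K - l : ℕ) := by
      push_cast [Nat.cast_sub (by omega : l ≤ p + N + 1 + K)]; ring
    have hb : ((p + N : ℕ) : ℤ) + 1 - (p + 1 : ℕ) = (N : ℕ) := by push_cast; ring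
    rw [ha, hb, izC_natCast, show p + 1 + (K + 1) - l - 2 = p + K - l by omega]
  · rw [Nat.choose_eq_zero_of_lt (by omega : m + 1 < p + 1 + (K + 1) - 1), Nat.cast_zero,
      mul_zero]
    exact sum_eq_zero fun l _ ↦ by rw [izC_of_neg (by omega), mul_zero]
end

section
/- Let p be a prime, and let r, b, c, m be nonnegative integers with 2 ≤ b ≤ p, r ≡ b (mod p−1), r ≥ b + c(p−1) + 1, and 0 ≤ m ≤ min(c−1, p−1); assume moreover b − 2m − 1 ≥ 0 (so the relevant exponents are nonnegative). For 0 ≤ i ≤ c set q(i) = x^{r−b+m−i(p−1)} · y^{b−m+i(p−1)} ∈ F_p[x,y]. Then for every integer a with 1 ≤ a ≤ c − m, the polynomial q(c−m−a) − Σ_{i=1}^{m+1} (-1)^{i+1} β(a,i) · q(c−m−1+i) is divisible by θ^{m+1} in F_p[x,y], where β(a,i) = C(i+a−2, a−1)·C(m+a, i+a−1) and θ = x^p y − x y^p. -/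
/-!
With `t = x^(p-1)` and `s = y^(p-1)` one has `θ = x y (t - s)`, and the polynomial factors as
`x^e₀ y^e₁ D`, where `e₀, e₁ ≥ m + 1` (from `r ≥ b + c(p-1) + 1` and `b ≥ 2m + 1`) and,
writing the paper's index as `a + 1`,
`D = D_a = t^(m+a+1) - Σ_{j ≤ m} (-1)^j β(a+1, j+1) t^(m-j) s^(a+j+1)`.
Pascal's rule and `C(n,k) C(k,s) = C(n,s) C(n-s,k-s)` give the recurrence
`β(a+2, j+1) + β(a+1, j+2) = C(m+a+1, a+1) C(m+1, j+1)`, hence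
`D_(a+1) = t D_a + C(m+a+1, a+1) s^(a+1) D_0` with `D_0 = (t - s)^(m+1)`,
and `(t - s)^(m+1) ∣ D_a` by induction on `a`.
-/

open Finset MvPolynomial

/-- `betaCoeff m a j` is the coefficient `β(a + 1, j + 1)` of the paper. -/
def betaCoeff (m a j : ℕ) : ℕ := (j + a).choose a * (m + a + 1).choose (j + a + 1)

theorem betaCoeff_zero_left (m j : ℕ) : betaCoeff m 0 j = (m + 1).choose (j + 1) := by
  simp [betaCoeff]

theorem betaCoeff_zero_right (m a : ℕ) : betaCoeff m a 0 = (m + a + 1).choose (a + 1) := by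
  simp [betaCoeff]

theorem betaCoeff_eq_zero {m j : ℕ} (a : ℕ) (h : m < j) : betaCoeff m a j = 0 := by
  rw [betaCoeff, Nat.choose_eq_zero_of_lt (n := m + a + 1) (by omega), Nat.mul_zero]

theorem betaCoeff_succ_add_betaCoeff_succ (m a j : ℕ) :
    betaCoeff m (a + 1) j + betaCoeff m a (j + 1) =
      (m + a + 1).choose (a + 1) * betaCoeff m 0 j := by
  have pascal₁ : (m + a + 2).choose (j + a + 2) =
      (m + a + 1).choose (j + a + 1) + (m + a + 1).choose (j + a + 2) := Nat.choose_succ_succ' _ _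
  have pascal₂ : (j + a + 2).choose (a + 1) = (j + a + 1).choose a + (j + a + 1).choose (a + 1) :=
    Nat.choose_succ_succ' _ _
  have pascal₃ : (m + 1).choose (j + 1) = m.choose j + m.choose (j + 1) :=
    Nat.choose_succ_succ' _ _
  have absorb₁ : (m + a + 1).choose (j + a + 1) * (j + a + 1).choose (a + 1) =
      (m + a + 1).choose (a + 1) * m.choose j := by
    simpa using Nat.choose_mul (n := m + a + 1) (k := j + a + 1) (s := a + 1) (by omega)
  have absorb₂ : (m + a + 1).choose (j + a + 2) * (j + a + 2).choose (a + 1) =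
      (m + a + 1).choose (a + 1) * m.choose (j + 1) := by
    simpa [show j + a + 2 - (a + 1) = j + 1 by omega]
      using Nat.choose_mul (n := m + a + 1) (k := j + a + 2) (s := a + 1) (by omega)
  rw [betaCoeff, betaCoeff, betaCoeff_zero_left, show j + (a + 1) = j + a + 1 by omega,
    show m + (a + 1) + 1 = m + a + 2 by omega, show j + a + 1 + 1 = j + a + 2 by omega,
    show j + 1 + a = j + a + 1 by omega]
  zify at pascal₁ pascal₂ pascal₃ absorb₁ absorb₂ ⊢
  linear_combination ((j + a + 1).choose (a + 1) : ℤ) * pascal₁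
    - ((m + a + 1).choose (j + a + 2) : ℤ) * pascal₂ + absorb₁ + absorb₂
    - ((m + a + 1).choose (a + 1) : ℤ) * pascal₃

section
variable {R : Type*} [CommRing R]

def betaPoly (t s : R) (m a : ℕ) : R :=
  t ^ (m + a + 1) -
    ∑ j ∈ range (m + 1), (-1) ^ j * (betaCoeff m a j : R) * t ^ (m - j) * s ^ (a + j + 1)

theorem betaPoly_zero (t s : R) (m : ℕ) : betaPoly t s m 0 = (t - s) ^ (m + 1) := by
  rw [sub_eq_neg_add, add_pow, sum_range_succ', betaPoly, sub_eq_add_neg, ← sum_neg_distrib,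
    add_comm]
  simp only [betaCoeff_zero_left, pow_zero, one_mul, Nat.sub_zero, Nat.choose_zero_right,
    Nat.cast_one, mul_one, Nat.add_sub_add_right, Nat.zero_add]
  congr 1
  refine sum_congr rfl fun j _ => ?_
  rw [neg_pow]
  ring

theorem betaPoly_succ (t s : R) (m a : ℕ) :
    betaPoly t s m (a + 1) =
      t * betaPoly t s m a + (m + a + 1).choose (a + 1) * s ^ (a + 1) * betaPoly t s m 0 := by
  set f : ℕ → R := fun j => (-1) ^ j * (betaCoeff m a j : R) * t ^ (m - j) * s ^ (a + j + 1)
  have shift : ∀ j, t * f (j + 1) =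
      -((-1) ^ j * (betaCoeff m a (j + 1) : R) * t ^ (m - j) * s ^ (a + j + 2)) := by
    intro j
    rcases lt_or_ge j m with hj | hj
    · rw [show m - j = m - (j + 1) + 1 by omega]
      simp only [f]
      ring
    -- for `j ≥ m` the exponent `m - (j + 1)` is truncated, but the coefficient vanishes
    · simp [f, betaCoeff_eq_zero a (show m < j + 1 by omega)]
  have hsum : t * ∑ j ∈ range (m + 1), f j =
      ((m + a + 1).choose (a + 1) : R) * t ^ (m + 1) * s ^ (a + 1) -
        ∑ j ∈ range (m + 1), (-1) ^ j * (betaCoeff m a (j + 1) : R) * t ^ (m - j) * s ^ (a + j + 2) := by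
    have hlast : f (m + 1) = 0 := by simp [f, betaCoeff_eq_zero a (Nat.lt_succ_self m)]
    rw [← add_zero (∑ j ∈ range (m + 1), f j), ← hlast, ← sum_range_succ, sum_range_succ', mul_add,
      mul_sum, sum_congr rfl fun j _ => shift j, sum_neg_distrib]
    simp only [f, betaCoeff_zero_right, Nat.sub_zero]
    ring
  have hsplit : ∑ j ∈ range (m + 1),
        (-1) ^ j * (betaCoeff m (a + 1) j : R) * t ^ (m - j) * s ^ (a + 1 + j + 1) =
      ((m + a + 1).choose (a + 1) : R) * s ^ (a + 1) *
          ∑ j ∈ range (m + 1), (-1) ^ j * (betaCoeff m 0 j : R) * t ^ (m - j) * s ^ (0 + j + 1) -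
        ∑ j ∈ range (m + 1), (-1) ^ j * (betaCoeff m a (j + 1) : R) * t ^ (m - j) * s ^ (a + j + 2) := by
    rw [mul_sum, ← sum_sub_distrib]
    refine sum_congr rfl fun j _ => ?_
    have := congrArg (Nat.cast (R := R)) (betaCoeff_succ_add_betaCoeff_succ m a j)
    push_cast at this
    rw [eq_sub_of_add_eq this]
    ring
  rw [betaPoly, betaPoly, betaPoly, hsplit, mul_sub, hsum]
  ring

theorem betaPoly_zero_dvd (t s : R) (m a : ℕ) : betaPoly t s m 0 ∣ betaPoly t s m a := by
  induction a with
  | zero => rfl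
  | succ a ih =>
    rw [betaPoly_succ]
    exact dvd_add (ih.mul_left t) (dvd_mul_left _ _)

theorem sub_sum_Icc_eq_mul_betaPoly (x y : R) (n e₀ e₁ m a : ℕ) :
    x ^ (e₀ + (m + a + 1) * n) * y ^ e₁ -
        ∑ i ∈ Icc 1 (m + 1), (-1) ^ (i + 1) *
          (((i + a - 1).choose a : R) * (m + a + 1).choose (i + a)) *
          (x ^ (e₀ + (m + 1 - i) * n) * y ^ (e₁ + (i + a) * n)) =
      x ^ e₀ * y ^ e₁ * betaPoly (x ^ n) (y ^ n) m a := by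
  rw [← Ico_add_one_right_eq_Icc, sum_Ico_eq_sum_range, Nat.add_sub_cancel, betaPoly, mul_sub,
    mul_sum]
  congr 1
  · ring
  refine sum_congr rfl fun j _ => ?_
  rw [show 1 + j + a - 1 = j + a by omega, show 1 + j + a = j + a + 1 by omega,
    show m + 1 - (1 + j) = m - j by omega, betaCoeff]
  push_cast
  ring

theorem theta_pow_dvd_sub_sum (x y : R) (n e₀ e₁ m a : ℕ) (he₀ : m + 1 ≤ e₀)
    (he₁ : m + 1 ≤ e₁) :
    (x ^ (n + 1) * y - x * y ^ (n + 1)) ^ (m + 1) ∣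
      x ^ (e₀ + (m + a + 1) * n) * y ^ e₁ -
        ∑ i ∈ Icc 1 (m + 1), (-1) ^ (i + 1) *
          (((i + a - 1).choose a : R) * (m + a + 1).choose (i + a)) *
          (x ^ (e₀ + (m + 1 - i) * n) * y ^ (e₁ + (i + a) * n)) := by
  have hθ : x ^ (n + 1) * y - x * y ^ (n + 1) = x * y * (x ^ n - y ^ n) := by ring
  rw [sub_sum_Icc_eq_mul_betaPoly, hθ, mul_pow, mul_pow, ← betaPoly_zero]
  exact mul_dvd_mul (mul_dvd_mul (pow_dvd_pow x he₀) (pow_dvd_pow y he₁))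
    (betaPoly_zero_dvd _ _ m a)

end

theorem stmt_13_general (p r b c m : ℕ) (hp : p.Prime)
    (hr : b + c * (p - 1) + 1 ≤ r)
    (hbm : 2 * m + 1 ≤ b)
    (a : ℕ) (ha1 : 1 ≤ a) (ha2 : a ≤ c - m) :
    let θ : MvPolynomial (Fin 2) (ZMod p) := X 0 ^ p * X 1 - X 0 * X 1 ^ p
    let q : ℕ → MvPolynomial (Fin 2) (ZMod p) := fun i =>
      X 0 ^ (r - b + m - i * (p - 1)) * X 1 ^ (b - m + i * (p - 1))
    θ ^ (m + 1) ∣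
      q (c - m - a) -
        ∑ i ∈ Finset.Icc 1 (m + 1),
          (-1 : MvPolynomial (Fin 2) (ZMod p)) ^ (i + 1) *
            C ((((i + a - 2).choose (a - 1)) * ((m + a).choose (i + a - 1)) : ZMod p)) *
            q (c - m - 1 + i) := by
  obtain ⟨n, rfl⟩ : ∃ n, p = n + 1 := ⟨p - 1, (Nat.sub_add_cancel hp.one_le).symm⟩
  obtain ⟨a, rfl⟩ : ∃ a', a = a' + 1 := ⟨a - 1, by omega⟩
  simp only [Nat.add_sub_cancel] at hr ⊢
  have key := theta_pow_dvd_sub_sum (X 0 : MvPolynomial (Fin 2) (ZMod (n + 1))) (X 1) n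
    (r - b + m - c * n) (b - m + (c - m - (a + 1)) * n) m a (by omega) (by omega)
  have hx : ∀ k ≤ c, r - b + m - k * n = r - b + m - c * n + (c - k) * n := fun k hk => by
    have := Nat.mul_le_mul_right n hk
    rw [Nat.sub_mul c]
    omega
  have hy : ∀ k ≥ c - m - (a + 1),
      b - m + k * n = b - m + (c - m - (a + 1)) * n + (k - (c - m - (a + 1))) * n := fun k hk => by
    have := Nat.mul_le_mul_right n hk
    rw [Nat.sub_mul k]
    omega
  convert key using 2
  · rw [hx _ (by omega), show c - (c - m - (a + 1)) = m + a + 1 by omega]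
  · refine sum_congr rfl fun i hi => ?_
    obtain ⟨hi₁, hi₂⟩ := mem_Icc.mp hi
    rw [hx _ (by omega), hy _ (by omega), map_mul, map_natCast, map_natCast,
      show i + (a + 1) - 2 = i + a - 1 by omega, show i + (a + 1) - 1 = i + a by omega,
      show c - (c - m - 1 + i) = m + 1 - i by omega,
      show c - m - 1 + i - (c - m - (a + 1)) = i + a by omega,
      ← add_assoc]

/-- θ^{m+1} divides q(c−m−a) − Σ_{i=1}^{m+1} (−1)^{i+1} β(a,i) q(c−m−1+i). -/
theorem stmt_13 (p r b c m : ℕ) (hp : p.Prime)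
    (hb1 : 2 ≤ b) (hb2 : b ≤ p) (hmod : r ≡ b [MOD p - 1])
    (hr : b + c * (p - 1) + 1 ≤ r)
    (hmc : m + 1 ≤ c) (hmp : m + 1 ≤ p) (hbm : 2 * m + 1 ≤ b)
    (a : ℕ) (ha1 : 1 ≤ a) (ha2 : a ≤ c - m) :
    let θ : MvPolynomial (Fin 2) (ZMod p) := X 0 ^ p * X 1 - X 0 * X 1 ^ p
    let q : ℕ → MvPolynomial (Fin 2) (ZMod p) := fun i =>
      X 0 ^ (r - b + m - i * (p - 1)) * X 1 ^ (b - m + i * (p - 1))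
    θ ^ (m + 1) ∣
      q (c - m - a) -
        ∑ i ∈ Finset.Icc 1 (m + 1),
          (-1 : MvPolynomial (Fin 2) (ZMod p)) ^ (i + 1) *
            C ((((i + a - 2).choose (a - 1)) * ((m + a).choose (i + a - 1)) : ZMod p)) *
            q (c - m - 1 + i) :=
  stmt_13_general p r b c m hp hr hbm a ha1 ha2
end
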